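/- arXiv:1608.07509 — 2 statements merged into one kernel-verified Lean document; each statement's English description precedes it below -/
import Mathlib

section
/- Let V be a finite-dimensional vector space with non-degenerate symmetric bilinear form B, and let (v_i), (v^i) be dual bases of V with respect to B. Then in the algebra S(V) ⊗ C(V), the element D̄ = Σᵢ v_i ⊗ v^i satisfies D̄² = Ω ⊗ 1, where Ω = Σᵢ v_i v^i ∈ S(V). -/
open TensorProduct CliffordAlgebra

/-! Expanding `D̄ * D̄` and pairing the terms `(i, k)` and `(k, i)`, each pair
contributes `vᵢ vₖ ⊗ (ι vⁱ ι vᵏ + ι vᵏ ι vⁱ) = vᵢ vₖ ⊗ (B(vⁱ, vᵏ) + B(vᵏ, vⁱ))` because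
`S(V)` is commutative, and the diagonal terms contribute `vᵢ² ⊗ B(vⁱ, vⁱ)`. Hence
`D̄² = (Σᵢₖ B(vⁱ, vᵏ) vᵢ vₖ) ⊗ 1`, and `Σₖ B(vⁱ, vᵏ) vₖ = vⁱ` by duality. -/

theorem Finset.sum_mul_sum_self_eq_sum_sum {ι R : Type*} [NonUnitalNonAssocSemiring R]
    (s : Finset ι) (x : ι → R) (β : ι → ι → R)
    (hsq : ∀ i, x i * x i = β i i) (hswap : ∀ i k, x i * x k + x k * x i = β i k + β k i) :
    (∑ i ∈ s, x i) * ∑ i ∈ s, x i = ∑ i ∈ s, ∑ k ∈ s, β i k := by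
  classical
  induction s using Finset.induction_on with
  | empty => simp
  | insert p s hp ih =>
    have hcross : (∑ i ∈ s, x i) * x p + x p * ∑ i ∈ s, x i = ∑ i ∈ s, (β i p + β p i) := by
      simp only [Finset.sum_mul, Finset.mul_sum, ← Finset.sum_add_distrib, hswap]
    simp only [Finset.sum_insert hp, add_mul, mul_add, ih, hsq, Finset.sum_add_distrib]
    calc _ = β p p + ((∑ i ∈ s, x i) * x p + x p * ∑ i ∈ s, x i) + ∑ i ∈ s, ∑ k ∈ s, β i k := by
          abel
      _ = _ := by rw [hcross, Finset.sum_add_distrib]; abel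

namespace CliffordAlgebra

variable {R M A : Type*} [CommRing R] [AddCommGroup M] [Module R M] [CommRing A] [Algebra R A]

theorem tmul_ι_mul_self (Q : QuadraticForm R M) (a : A) (v : M) :
    (a ⊗ₜ[R] ι Q v) * (a ⊗ₜ[R] ι Q v) = (Q v • (a * a)) ⊗ₜ[R] (1 : CliffordAlgebra Q) := by
  rw [Algebra.TensorProduct.tmul_mul_tmul, ι_sq_scalar, Algebra.algebraMap_eq_smul_one,
    tmul_smul, smul_tmul']

theorem tmul_ι_mul_tmul_ι_add_swap (Q : QuadraticForm R M) (a b : A) (v w : M) :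
    (a ⊗ₜ[R] ι Q v) * (b ⊗ₜ[R] ι Q w) + (b ⊗ₜ[R] ι Q w) * (a ⊗ₜ[R] ι Q v)
      = (QuadraticMap.polar Q v w • (a * b)) ⊗ₜ[R] (1 : CliffordAlgebra Q) := by
  rw [Algebra.TensorProduct.tmul_mul_tmul, Algebra.TensorProduct.tmul_mul_tmul, mul_comm b a,
    ← tmul_add, ι_mul_ι_add_swap, Algebra.algebraMap_eq_smul_one, tmul_smul, smul_tmul']

theorem sum_tmul_ι_mul_self_toQuadraticMap {κ : Type*} (B : LinearMap.BilinForm R M)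
    (s : Finset κ) (a : κ → A) (w : κ → M) :
    (∑ i ∈ s, a i ⊗ₜ[R] ι B.toQuadraticMap (w i)) * ∑ i ∈ s, a i ⊗ₜ[R] ι B.toQuadraticMap (w i)
      = (∑ i ∈ s, ∑ k ∈ s, B (w i) (w k) • (a i * a k)) ⊗ₜ[R]
          (1 : CliffordAlgebra B.toQuadraticMap) := by
  simp only [sum_tmul]
  refine Finset.sum_mul_sum_self_eq_sum_sum s _ _ (fun i => ?_) (fun i k => ?_)
  · rw [tmul_ι_mul_self, LinearMap.BilinMap.toQuadraticMap_apply]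
  · rw [tmul_ι_mul_tmul_ι_add_swap, LinearMap.BilinMap.polar_toQuadraticMap, add_smul,
      add_tmul, mul_comm (a k)]

end CliffordAlgebra

theorem Module.Basis.repr_eq_of_dual {ι R M : Type*} [DecidableEq ι] [CommRing R]
    [AddCommGroup M] [Module R M] (b : Module.Basis ι R M) (b' : ι → M)
    (B : LinearMap.BilinForm R M) (hdual : ∀ i j, B (b i) (b' j) = if i = j then 1 else 0)
    (v : M) (k : ι) : b.repr v k = B v (b' k) := by
  have : b.coord k = B.flip (b' k) := b.ext fun i => by
    simp [hdual, Finsupp.single_apply]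
  exact LinearMap.congr_fun this v

theorem stmt11_general {F V A : Type*} [Field F] [AddCommGroup V] [Module F V]
    [CommRing A] [Algebra F A]
    (B : LinearMap.BilinForm F V)
    (n : ℕ) (bv bv' : Module.Basis (Fin n) F V)
    (hdual : ∀ i j, B (bv i) (bv' j) = if i = j then (1 : F) else 0)
    (j : V →ₗ[F] A) :
    (∑ i, j (bv i) ⊗ₜ[F] ι (LinearMap.BilinMap.toQuadraticMap B) (bv' i)) *
        (∑ i, j (bv i) ⊗ₜ[F] ι (LinearMap.BilinMap.toQuadraticMap B) (bv' i))
      = (∑ i, j (bv i) * j (bv' i)) ⊗ₜ[F]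
          (1 : CliffordAlgebra (LinearMap.BilinMap.toQuadraticMap B)) := by
  have hexpand : ∀ i, j (bv' i) = ∑ k, B (bv' i) (bv' k) • j (bv k) := fun i => by
    conv_lhs => rw [← bv.sum_repr (bv' i)]
    simp only [map_sum, map_smul, bv.repr_eq_of_dual bv' B hdual]
  rw [sum_tmul_ι_mul_self_toQuadraticMap]
  simp only [hexpand, Finset.mul_sum, mul_smul_comm]

/-- in `S(V) ⊗ C(V)` (the symmetric algebra modelled by a commutative
algebra `A` with a linear map `j : V → A`), with dual bases `(vᵢ), (vⁱ)` of `V`, the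
element `D̄ = Σᵢ vᵢ ⊗ vⁱ` satisfies `D̄² = Ω ⊗ 1`, where `Ω = Σᵢ vᵢ vⁱ`. -/
theorem stmt11 {F V A : Type*} [Field F] [CharZero F] [AddCommGroup V] [Module F V]
    [FiniteDimensional F V] [CommRing A] [Algebra F A]
    (B : LinearMap.BilinForm F V)
    (hsymm : ∀ v w, B v w = B w v)
    (hnd : ∀ v, (∀ w, B v w = 0) → v = 0)
    (n : ℕ) (bv bv' : Module.Basis (Fin n) F V)
    (hdual : ∀ i j, B (bv i) (bv' j) = if i = j then (1 : F) else 0)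
    (j : V →ₗ[F] A) :
    (∑ i, j (bv i) ⊗ₜ[F] ι (LinearMap.BilinMap.toQuadraticMap B) (bv' i)) *
        (∑ i, j (bv i) ⊗ₜ[F] ι (LinearMap.BilinMap.toQuadraticMap B) (bv' i))
      = (∑ i, j (bv i) * j (bv' i)) ⊗ₜ[F]
          (1 : CliffordAlgebra (LinearMap.BilinMap.toQuadraticMap B)) :=
  stmt11_general B n bv bv' hdual j
end

section
/- Let A = (T(V) ⋊ H)/I_κ be an algebra where H is a cocommutative Hopf algebra, V a finite-dimensional H-module with H-invariant non-degenerate symmetric bilinear form B, κ : V ∧ V → H an H-linear map, and I_κ the ideal generated by vw − wv − κ(v∧w). Let (v_k), (v^k) be dual bases of V with respect to B, C = C(V) the Clifford algebra, D = Σ_k v_k ⊗ v^k ∈ A ⊗ C, and Ω = Σ_k v_k v^k ∈ A. Then D² = Ω ⊗ 1 + (1/2) Σ_{k<l} κ(v_k, v_l) ⊗ [v^k, v^l], where [·,·] is the commutator in C. -/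
open TensorProduct CliffordAlgebra

/-- Sweedler-type map: sends `a ⊗ b` to `B (a • v) (b • w)`. -/
noncomputable def sweedlerB {F H V : Type*} [CommRing F] [Ring H] [Algebra F H]
    [AddCommGroup V] [Module F V]
    (act : H →ₗ[F] Module.End F V) (B : V →ₗ[F] V →ₗ[F] F) (v w : V) :
    H ⊗[F] H →ₗ[F] F :=
  TensorProduct.lift (B.compl₁₂ ((LinearMap.applyₗ v).comp act) ((LinearMap.applyₗ w).comp act))

/-! Expand `D² = Σ_{k,l} v_k v_l ⊗ vᵏ vˡ` and split each Clifford product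
`vᵏ vˡ = B(vᵏ, vˡ) + ½ [vᵏ, vˡ]` into its symmetric and antisymmetric parts. The symmetric
parts reassemble to `Ω ⊗ 1`, because `vᵏ = Σ_l B(vᵏ, vˡ) v_l`. In the antisymmetric part the
terms `(k, l)` and `(l, k)` combine to `[v_k, v_l] ⊗ [vᵏ, vˡ] = κ(v_k, v_l) ⊗ [vᵏ, vˡ]`. -/

theorem Finset.sum_sum_eq_sum_diag_add_sum_Ioi {ι M : Type*} [LinearOrder ι] [Fintype ι]
    [LocallyFiniteOrderTop ι] [LocallyFiniteOrderBot ι] [AddCommMonoid M] (f : ι → ι → M) :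
    ∑ k, ∑ l, f k l = ∑ k, f k k + ∑ k, ∑ l ∈ Ioi k, (f k l + f l k) := by
  have swap : ∑ k, ∑ l ∈ Iio k, f k l = ∑ k, ∑ l ∈ Ioi k, f l k :=
    sum_comm' (by simp)
  have split (k : ι) : ∑ l, f k l = f k k + (∑ l ∈ Ioi k, f k l + ∑ l ∈ Iio k, f k l) := by
    rw [← sum_disjUnion (disjoint_Ioi_Iio k), Ioi_disjUnion_Iio,
      ← sum_compl_add_sum {k} (f k), sum_singleton, add_comm]
  simp_rw [split, sum_add_distrib, swap]

theorem TensorProduct.sum_sum_tmul_sub_swap {ι R M N : Type*} [LinearOrder ι] [Fintype ι]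
    [LocallyFiniteOrderTop ι] [LocallyFiniteOrderBot ι] [CommRing R] [AddCommGroup M]
    [Module R M] [AddCommGroup N] [Module R N] (a : ι → ι → M) (c : ι → ι → N) :
    ∑ k, ∑ l, a k l ⊗ₜ[R] (c k l - c l k)
      = ∑ k, ∑ l ∈ Finset.Ioi k, (a k l - a l k) ⊗ₜ[R] (c k l - c l k) := by
  rw [Finset.sum_sum_eq_sum_diag_add_sum_Ioi]
  simp only [sub_self, tmul_zero, Finset.sum_const_zero, zero_add]
  refine Finset.sum_congr rfl fun k _ => Finset.sum_congr rfl fun l _ => ?_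
  rw [← neg_sub (c k l), tmul_neg, ← sub_eq_add_neg, ← sub_tmul]

theorem Module.Basis.sum_bilin_smul_of_dual {ι R M : Type*} [Fintype ι] [DecidableEq ι]
    [CommRing R] [AddCommGroup M] [Module R M] {B : LinearMap.BilinForm R M} {b b' : Module.Basis ι R M}
    (hdual : ∀ i j, B (b i) (b' j) = if i = j then 1 else 0) (v : M) :
    ∑ l, B v (b' l) • b l = v := by
  have hrepr (l : ι) : B v (b' l) = b.repr v l := by
    conv_lhs => rw [← b.sum_repr v]
    simp only [map_sum, map_smul, LinearMap.sum_apply, LinearMap.smul_apply, hdual,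
      smul_eq_mul, mul_ite, mul_one, mul_zero, Finset.sum_ite_eq', Finset.mem_univ, ↓reduceIte]
  simp_rw [hrepr, b.sum_repr]

theorem CliffordAlgebra.ι_mul_ι_eq_smul_one_add_half_lie {R M : Type*} [CommRing R]
    [Invertible (2 : R)] [AddCommGroup M] [Module R M] {B : LinearMap.BilinForm R M}
    (hsymm : ∀ u w, B u w = B w u) (u w : M) :
    ι B.toQuadraticMap u * ι B.toQuadraticMap w
      = B u w • (1 : CliffordAlgebra B.toQuadraticMap)
        + ⅟(2 : R) • ⁅ι B.toQuadraticMap u, ι B.toQuadraticMap w⁆ := by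
  have hanti := ι_mul_ι_add_swap (Q := B.toQuadraticMap) u w
  rw [LinearMap.BilinMap.polar_toQuadraticMap, hsymm w u, ← two_mul,
    Algebra.algebraMap_eq_smul_one, mul_smul] at hanti
  rw [Ring.lie_def, eq_sub_of_add_eq' hanti, sub_sub_eq_add_sub, ← two_smul R, ← smul_sub,
    invOf_smul_smul, add_sub_cancel]

theorem stmt12_general {F H V A : Type*} [Field F] [CharZero F] [Ring H] [HopfAlgebra F H]
    [AddCommGroup V] [Module F V] [Ring A] [Algebra F A]
    (B : LinearMap.BilinForm F V)
    (hsymm : ∀ v w, B v w = B w v)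
    (κ : V →ₗ[F] V →ₗ[F] H)
    (jV : V →ₗ[F] A) (jH : H →ₐ[F] A)
    (hrel : ∀ v w : V, jV v * jV w - jV w * jV v = jH (κ v w))
    (n : ℕ) (bv bv' : Module.Basis (Fin n) F V)
    (hdual : ∀ i j, B (bv i) (bv' j) = if i = j then (1 : F) else 0) :
    (∑ k, jV (bv k) ⊗ₜ[F] ι (LinearMap.BilinMap.toQuadraticMap B) (bv' k)) *
        (∑ k, jV (bv k) ⊗ₜ[F] ι (LinearMap.BilinMap.toQuadraticMap B) (bv' k))
      = (∑ k, jV (bv k) * jV (bv' k)) ⊗ₜ[F]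
            (1 : CliffordAlgebra (LinearMap.BilinMap.toQuadraticMap B))
        + (2 : F)⁻¹ • ∑ k, ∑ l ∈ Finset.Ioi k,
            jH (κ (bv k) (bv l)) ⊗ₜ[F]
              (ι (LinearMap.BilinMap.toQuadraticMap B) (bv' k) *
                  ι (LinearMap.BilinMap.toQuadraticMap B) (bv' l)
                - ι (LinearMap.BilinMap.toQuadraticMap B) (bv' l) *
                  ι (LinearMap.BilinMap.toQuadraticMap B) (bv' k)) := by
  let _ : Invertible (2 : F) := invertibleOfNonzero two_ne_zero
  have hΩ (k : Fin n) : ∑ l, B (bv' k) (bv' l) • (jV (bv k) * jV (bv l))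
      = jV (bv k) * jV (bv' k) := by
    simp_rw [← mul_smul_comm, ← Finset.mul_sum, ← map_smul, ← map_sum,
      bv.sum_bilin_smul_of_dual hdual]
  conv_lhs =>
    simp only [Finset.sum_mul_sum, Algebra.TensorProduct.tmul_mul_tmul,
      ι_mul_ι_eq_smul_one_add_half_lie hsymm, tmul_add, Finset.sum_add_distrib]
  simp_rw [tmul_smul, ← Finset.smul_sum, Ring.lie_def, sum_sum_tmul_sub_swap, hrel, smul_tmul',
    ← sum_tmul, hΩ, invOf_eq_inv]

/-- Let `A = (T(V) ⋊ H)/I_κ` where `H` is a cocommutative Hopf algebra,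
`V` a finite-dimensional `H`-module with `H`-invariant non-degenerate symmetric bilinear
form `B`, and `κ : V ∧ V → H` an `H`-linear (for the adjoint action) map; `A` is presented
by a linear map `jV : V → A`, an algebra map `jH : H → A`, the smash-product relation
`h v = (h₍₁₎ • v) h₍₂₎` and the relation `v w − w v = κ(v,w)`.  With dual bases
`(v_k), (vᵏ)` of `V`, `D = Σ_k v_k ⊗ vᵏ ∈ A ⊗ C(V)` and `Ω = Σ_k v_k vᵏ ∈ A`, one has
`D² = Ω ⊗ 1 + (1/2) Σ_{k<l} κ(v_k, v_l) ⊗ [vᵏ, vˡ]`. -/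
theorem stmt12 {F H V A : Type*} [Field F] [CharZero F] [Ring H] [HopfAlgebra F H]
    [AddCommGroup V] [Module F V] [FiniteDimensional F V] [Ring A] [Algebra F A]
    (hcc : ∀ h : H, (TensorProduct.comm F H H) (Coalgebra.comul (R := F) h)
        = Coalgebra.comul (R := F) h)
    (ρ : H →ₐ[F] Module.End F V)
    (B : LinearMap.BilinForm F V)
    (hsymm : ∀ v w, B v w = B w v)
    (hnd : ∀ v, (∀ w, B v w = 0) → v = 0)
    (hinv : ∀ (h : H) (v w : V),
        sweedlerB ρ.toLinearMap B v w (Coalgebra.comul (R := F) h)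
          = Coalgebra.counit (R := F) h * B v w)
    (κ : V →ₗ[F] V →ₗ[F] H)
    (hκalt : ∀ v : V, κ v v = 0)
    (hκlin : ∀ (h : H) (v w : V),
        TensorProduct.lift (κ.compl₁₂ ((LinearMap.applyₗ v).comp ρ.toLinearMap)
            ((LinearMap.applyₗ w).comp ρ.toLinearMap)) (Coalgebra.comul (R := F) h)
          = TensorProduct.lift ((LinearMap.mul F H).compl₂
              ((LinearMap.mulLeft F (κ v w)).comp (HopfAlgebra.antipode (R := F))))
              (Coalgebra.comul (R := F) h))
    (jV : V →ₗ[F] A) (jH : H →ₐ[F] A)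
    (hsmash : ∀ (h : H) (v : V),
        jH h * jV v = TensorProduct.lift ((LinearMap.mul F A).compl₁₂
            (jV ∘ₗ ((LinearMap.applyₗ v).comp ρ.toLinearMap)) jH.toLinearMap)
          (Coalgebra.comul (R := F) h))
    (hrel : ∀ v w : V, jV v * jV w - jV w * jV v = jH (κ v w))
    (n : ℕ) (bv bv' : Module.Basis (Fin n) F V)
    (hdual : ∀ i j, B (bv i) (bv' j) = if i = j then (1 : F) else 0) :
    (∑ k, jV (bv k) ⊗ₜ[F] ι (LinearMap.BilinMap.toQuadraticMap B) (bv' k)) *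
        (∑ k, jV (bv k) ⊗ₜ[F] ι (LinearMap.BilinMap.toQuadraticMap B) (bv' k))
      = (∑ k, jV (bv k) * jV (bv' k)) ⊗ₜ[F]
            (1 : CliffordAlgebra (LinearMap.BilinMap.toQuadraticMap B))
        + (2 : F)⁻¹ • ∑ k, ∑ l ∈ Finset.Ioi k,
            jH (κ (bv k) (bv l)) ⊗ₜ[F]
              (ι (LinearMap.BilinMap.toQuadraticMap B) (bv' k) *
                  ι (LinearMap.BilinMap.toQuadraticMap B) (bv' l)
                - ι (LinearMap.BilinMap.toQuadraticMap B) (bv' l) *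
                  ι (LinearMap.BilinMap.toQuadraticMap B) (bv' k)) :=
  stmt12_general B hsymm κ jV jH hrel n bv bv' hdual
end
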